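/- The matrices built from the TBT data satisfy the identities 𝒜_1 M_{42} − M_{42} A_1^* = i·(K_{11} M_{21} + 𝟏_n K) and 𝒜_2 M_{41} − M_{41} A_2^* = i·(K_{12} M_{22} + 𝟏_m K). -/

import Mathlib

open Matrix

noncomputable section

/-- The scalar sequence `a_r`: `0` for `r < 0`, `i/2` for `r = 0`, `i` for `r > 0`. -/
def aC (r : ℤ) : ℂ := if r < 0 then 0 else if r = 0 then Complex.I / 2 else Complex.I

/-- `A_1`: block matrix `{𝒜_{1,p−q}}` with blocks `0`, `(i/2)I_m`, `i·I_m`. -/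
def A1 (m n : ℕ) : Matrix (Fin n × Fin m) (Fin n × Fin m) ℂ :=
  Matrix.of fun r c => if r.2 = c.2 then aC (((r.1 : ℕ) : ℤ) - ((c.1 : ℕ) : ℤ)) else 0

/-- `A_2 = diag{𝒜_{2,0}, …, 𝒜_{2,0}}`. -/
def A2 (m n : ℕ) : Matrix (Fin n × Fin m) (Fin n × Fin m) ℂ :=
  Matrix.of fun r c => if r.1 = c.1 then aC (((r.2 : ℕ) : ℤ) - ((c.2 : ℕ) : ℤ)) else 0

/-- `𝒜_1 = {a_{j−ℓ}}_{j,ℓ=1}^n`. -/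
def calA1 (n : ℕ) : Matrix (Fin n) (Fin n) ℂ :=
  Matrix.of fun p q => aC (((p : ℕ) : ℤ) - ((q : ℕ) : ℤ))

/-- `𝒜_2 = {a_{j−ℓ}}_{j,ℓ=1}^m`. -/
def calA2 (m : ℕ) : Matrix (Fin m) (Fin m) ℂ :=
  Matrix.of fun j l => aC (((j : ℕ) : ℤ) - ((l : ℕ) : ℤ))

/-- The Toeplitz-block Toeplitz matrix `T`, entry `t_{p−q}^{(j−ℓ)}`. -/
def TBT (m n : ℕ) (t : ℤ → ℤ → ℂ) : Matrix (Fin n × Fin m) (Fin n × Fin m) ℂ :=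
  Matrix.of fun r c =>
    t (((r.1 : ℕ) : ℤ) - ((c.1 : ℕ) : ℤ)) (((r.2 : ℕ) : ℤ) - ((c.2 : ℕ) : ℤ))

/-- `M_{11}`: block column, `p`-th block `(1/2)𝒯_0 + Σ_{s=1}^{p−1} 𝒯_s`. -/
def M11 (m n : ℕ) (t : ℤ → ℤ → ℂ) : Matrix (Fin n × Fin m) (Fin m) ℂ :=
  Matrix.of fun r l => (1 / 2 : ℂ) * t 0 (((r.2 : ℕ) : ℤ) - ((l : ℕ) : ℤ))
    + ∑ s ∈ Finset.range (r.1 : ℕ), t ((s : ℤ) + 1) (((r.2 : ℕ) : ℤ) - ((l : ℕ) : ℤ))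

/-- `M_{21} = [I_m I_m … I_m]`. -/
def M21 (m n : ℕ) : Matrix (Fin m) (Fin n × Fin m) ℂ :=
  Matrix.of fun j c => if j = c.2 then 1 else 0

/-- `M_{31} = M_{21}^*`. -/
def M31 (m n : ℕ) : Matrix (Fin n × Fin m) (Fin m) ℂ := (M21 m n)ᴴ

/-- `M_{41}`: block row, `q`-th block `(1/2)𝒯_0 + Σ_{s=1}^{q−1} 𝒯_{−s}`. -/
def M41 (m n : ℕ) (t : ℤ → ℤ → ℂ) : Matrix (Fin m) (Fin n × Fin m) ℂ :=
  Matrix.of fun j c => (1 / 2 : ℂ) * t 0 (((j : ℕ) : ℤ) - ((c.2 : ℕ) : ℤ))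
    + ∑ s ∈ Finset.range (c.1 : ℕ), t (-((s : ℤ) + 1)) (((j : ℕ) : ℤ) - ((c.2 : ℕ) : ℤ))

/-- `j`-th entry of the column `ℳ_{12}^{(r)}`. -/
def m12e (m : ℕ) (t : ℤ → ℤ → ℂ) (r : ℤ) (j : Fin m) : ℂ :=
  (1 / 2 : ℂ) * t r 0 + ∑ s ∈ Finset.range (j : ℕ), t r ((s : ℤ) + 1)

/-- `ℓ`-th entry of the row `ℳ_{42}^{(r)}`. -/
def m42e (m : ℕ) (t : ℤ → ℤ → ℂ) (r : ℤ) (l : Fin m) : ℂ :=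
  (1 / 2 : ℂ) * t r 0 + ∑ s ∈ Finset.range (l : ℕ), t r (-((s : ℤ) + 1))

/-- `M_{12} = {ℳ_{12}^{(p−q)}}`. -/
def M12 (m n : ℕ) (t : ℤ → ℤ → ℂ) : Matrix (Fin n × Fin m) (Fin n) ℂ :=
  Matrix.of fun r q => m12e m t (((r.1 : ℕ) : ℤ) - ((q : ℕ) : ℤ)) r.2

/-- `M_{22}`. -/
def M22 (m n : ℕ) : Matrix (Fin n) (Fin n × Fin m) ℂ :=
  Matrix.of fun p c => if p = c.1 then 1 else 0

/-- `M_{32} = M_{22}^*`. -/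
def M32 (m n : ℕ) : Matrix (Fin n × Fin m) (Fin n) ℂ := (M22 m n)ᴴ

/-- `M_{42} = {ℳ_{42}^{(p−q)}}`. -/
def M42 (m n : ℕ) (t : ℤ → ℤ → ℂ) : Matrix (Fin n) (Fin n × Fin m) ℂ :=
  Matrix.of fun p c => m42e m t (((p : ℕ) : ℤ) - ((c.1 : ℕ) : ℤ)) c.2

/-- `K`: the `1×mn` row, `q`-th block `(1/2)ℳ_{42}^{(0)} + Σ_{s=1}^{q−1} ℳ_{42}^{(−s)}`. -/
def Krow (m n : ℕ) (t : ℤ → ℤ → ℂ) : (Fin n × Fin m) → ℂ :=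
  fun c => (1 / 2 : ℂ) * m42e m t 0 c.2
    + ∑ s ∈ Finset.range (c.1 : ℕ), m42e m t (-((s : ℤ) + 1)) c.2

/-- `K_{11}`: `p`-th row `(1/2)ℳ_{42}^{(0)} + Σ_{s=1}^{p−1} ℳ_{42}^{(s)}`. -/
def K11 (m n : ℕ) (t : ℤ → ℤ → ℂ) : Matrix (Fin n) (Fin m) ℂ :=
  Matrix.of fun p l => (1 / 2 : ℂ) * m42e m t 0 l
    + ∑ s ∈ Finset.range (p : ℕ), m42e m t ((s : ℤ) + 1) l

/-- `K_{12}`: `q`-th column `(1/2)ℳ_{12}^{(0)} + Σ_{s=1}^{q−1} ℳ_{12}^{(−s)}`. -/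
def K12 (m n : ℕ) (t : ℤ → ℤ → ℂ) : Matrix (Fin m) (Fin n) ℂ :=
  Matrix.of fun j q => (1 / 2 : ℂ) * m12e m t 0 j
    + ∑ s ∈ Finset.range (q : ℕ), m12e m t (-((s : ℤ) + 1)) j

/-- `Π_1 = [M_{11} M_{31}]`. -/
def Pi1 (m n : ℕ) (t : ℤ → ℤ → ℂ) : Matrix (Fin n × Fin m) (Fin m ⊕ Fin m) ℂ :=
  fromCols (M11 m n t) (M31 m n)

/-- `Π_2 = [M_{12} M_{32}]`. -/
def Pi2 (m n : ℕ) (t : ℤ → ℤ → ℂ) : Matrix (Fin n × Fin m) (Fin n ⊕ Fin n) ℂ :=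
  fromCols (M12 m n t) (M32 m n)

/-- `Π̂_1 = col[M_{21}; M_{41}]`. -/
def PiHat1 (m n : ℕ) (t : ℤ → ℤ → ℂ) : Matrix (Fin m ⊕ Fin m) (Fin n × Fin m) ℂ :=
  fromRows (M21 m n) (M41 m n t)

/-- `Π̂_2 = col[M_{22}; M_{42}]`. -/
def PiHat2 (m n : ℕ) (t : ℤ → ℤ → ℂ) : Matrix (Fin n ⊕ Fin n) (Fin n × Fin m) ℂ :=
  fromRows (M22 m n) (M42 m n t)

/-- All-ones vector. -/
def onesV (k : Type*) : k → ℂ := fun _ => 1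

/-- `g_{12} = i·Π̂_1 T^{-1} Π_2 − i·[[𝟏_m 𝟏_n^*, 0],[K_{12}, 0]]`. -/
def g12M (m n : ℕ) (t : ℤ → ℤ → ℂ) : Matrix (Fin m ⊕ Fin m) (Fin n ⊕ Fin n) ℂ :=
  Complex.I • (PiHat1 m n t * (TBT m n t)⁻¹ * Pi2 m n t)
    - Complex.I • fromBlocks (vecMulVec (onesV (Fin m)) (onesV (Fin n))) 0 (K12 m n t) 0

/-- `g_{21} = i·Π̂_2 T^{-1} Π_1 − i·[[𝟏_n 𝟏_m^*, 0],[K_{11}, 0]]`. -/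
def g21M (m n : ℕ) (t : ℤ → ℤ → ℂ) : Matrix (Fin n ⊕ Fin n) (Fin m ⊕ Fin m) ℂ :=
  Complex.I • (PiHat2 m n t * (TBT m n t)⁻¹ * Pi1 m n t)
    - Complex.I • fromBlocks (vecMulVec (onesV (Fin n)) (onesV (Fin m))) 0 (K11 m n t) 0

/-- The `k×k` flip (anti-diagonal) matrix. -/
def flipU (k : ℕ) : Matrix (Fin k) (Fin k) ℂ :=
  Matrix.of fun p q => if (p : ℕ) + (q : ℕ) + 1 = k then 1 else 0

/-- `U_{2k}`, the `2k×2k` flip matrix on the sum type. -/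
def U2 (k : ℕ) : Matrix (Fin k ⊕ Fin k) (Fin k ⊕ Fin k) ℂ :=
  fromBlocks 0 (flipU k) (flipU k) 0

/-- `J_{2k} = diag{I_k, −I_k}`. -/
def J2 (k : ℕ) : Matrix (Fin k ⊕ Fin k) (Fin k ⊕ Fin k) ℂ :=
  fromBlocks 1 0 0 (-1)

/-- `U = U_{mn}`, the `mn×mn` flip matrix (global index `m·p + j`). -/
def UmnM (m n : ℕ) : Matrix (Fin n × Fin m) (Fin n × Fin m) ℂ :=
  Matrix.of fun r c =>
    if m * (r.1 : ℕ) + (r.2 : ℕ) + (m * (c.1 : ℕ) + (c.2 : ℕ)) + 1 = m * n then 1 else 0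

/-- `ψ(λ) = (λ + i/2)/(λ − i/2)`. -/
def psiM (l : ℂ) : ℂ := (l + Complex.I / 2) / (l - Complex.I / 2)

/-- `h(y_1, y_2)`, entry `y_1^{p−1} y_2^{j−1}`. -/
def hVec (m n : ℕ) (y1 y2 : ℂ) : (Fin n × Fin m) → ℂ :=
  fun r => y1 ^ (r.1 : ℕ) * y2 ^ (r.2 : ℕ)

/-- `ω(λ,μ) = 𝟏^*(A_1^*−μ_1)^{-1}(A_2^*−μ_2)^{-1}T^{-1}(A_2−λ_2)^{-1}(A_1−λ_1)^{-1}𝟏`. -/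
def omegaF (m n : ℕ) (t : ℤ → ℤ → ℂ) (l1 l2 u1 u2 : ℂ) : ℂ :=
  star (onesV (Fin n × Fin m)) ⬝ᵥ
    ((((A1 m n)ᴴ - u1 • 1)⁻¹ * ((A2 m n)ᴴ - u2 • 1)⁻¹ * (TBT m n t)⁻¹ *
      (A2 m n - l2 • 1)⁻¹ * (A1 m n - l1 • 1)⁻¹) *ᵥ onesV (Fin n × Fin m))

/-- `ρ(y,z) = h(conj z_1, conj z_2)^* T^{-1} h(y_1,y_2)`. -/
def rhoF (m n : ℕ) (t : ℤ → ℤ → ℂ) (y1 y2 z1 z2 : ℂ) : ℂ :=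
  star (hVec m n ((starRingEnd ℂ) z1) ((starRingEnd ℂ) z2)) ⬝ᵥ
    ((TBT m n t)⁻¹ *ᵥ hVec m n y1 y2)

/-- `Γ_1 = T^{-1}Π_1`. -/
def Gam1 (m n : ℕ) (t : ℤ → ℤ → ℂ) : Matrix (Fin n × Fin m) (Fin m ⊕ Fin m) ℂ :=
  (TBT m n t)⁻¹ * Pi1 m n t

/-- `Γ_2 = T^{-1}Π_2`. -/
def Gam2 (m n : ℕ) (t : ℤ → ℤ → ℂ) : Matrix (Fin n × Fin m) (Fin n ⊕ Fin n) ℂ :=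
  (TBT m n t)⁻¹ * Pi2 m n t

/-- `Γ̂_1 = Π̂_1 T^{-1}`. -/
def GamHat1 (m n : ℕ) (t : ℤ → ℤ → ℂ) : Matrix (Fin m ⊕ Fin m) (Fin n × Fin m) ℂ :=
  PiHat1 m n t * (TBT m n t)⁻¹

/-- `Γ̂_2 = Π̂_2 T^{-1}`. -/
def GamHat2 (m n : ℕ) (t : ℤ → ℤ → ℂ) : Matrix (Fin n ⊕ Fin n) (Fin n × Fin m) ℂ :=
  PiHat2 m n t * (TBT m n t)⁻¹

/-- `Γ = [Γ_1 Γ_2]`. -/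
def GammaFull (m n : ℕ) (t : ℤ → ℤ → ℂ) :
    Matrix (Fin n × Fin m) ((Fin m ⊕ Fin m) ⊕ (Fin n ⊕ Fin n)) ℂ :=
  fromCols (Gam1 m n t) (Gam2 m n t)

/-- `Γ̂ = col[Γ̂_1; Γ̂_2]`. -/
def GammaHatFull (m n : ℕ) (t : ℤ → ℤ → ℂ) :
    Matrix ((Fin m ⊕ Fin m) ⊕ (Fin n ⊕ Fin n)) (Fin n × Fin m) ℂ :=
  fromRows (GamHat1 m n t) (GamHat2 m n t)

/-- The row vector `u(μ)`. -/
def uRow (m n : ℕ) (t : ℤ → ℤ → ℂ) (u1 u2 : ℂ) :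
    ((Fin m ⊕ Fin m) ⊕ (Fin n ⊕ Fin n)) → ℂ :=
  star (onesV (Fin n × Fin m)) ᵥ*
      (((A1 m n)ᴴ - u1 • 1)⁻¹ * ((A2 m n)ᴴ - u2 • 1)⁻¹ * GammaFull m n t)
    - Complex.I • Sum.elim
        (Sum.elim (star (onesV (Fin m)) ᵥ* ((calA2 m)ᴴ - u2 • 1)⁻¹) (0 : Fin m → ℂ))
        (Sum.elim (star (onesV (Fin n)) ᵥ* ((calA1 n)ᴴ - u1 • 1)⁻¹) (0 : Fin n → ℂ))

/-- The column vector `û(λ)`. -/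
def uHatCol (m n : ℕ) (t : ℤ → ℤ → ℂ) (l1 l2 : ℂ) :
    ((Fin m ⊕ Fin m) ⊕ (Fin n ⊕ Fin n)) → ℂ :=
  (GammaHatFull m n t * (A2 m n - l2 • 1)⁻¹ * (A1 m n - l1 • 1)⁻¹) *ᵥ onesV (Fin n × Fin m)
    + Complex.I • Sum.elim
        (Sum.elim (0 : Fin m → ℂ) ((calA2 m - l2 • 1)⁻¹ *ᵥ onesV (Fin m)))
        (Sum.elim (0 : Fin n → ℂ) ((calA1 n - l1 • 1)⁻¹ *ᵥ onesV (Fin n)))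

/-- `P_1 = diag{I_{2m}, 0}`. -/
def P1M (m n : ℕ) :
    Matrix ((Fin m ⊕ Fin m) ⊕ (Fin n ⊕ Fin n)) ((Fin m ⊕ Fin m) ⊕ (Fin n ⊕ Fin n)) ℂ :=
  fromBlocks 1 0 0 0

/-- `P_2 = I − P_1`. -/
def P2M (m n : ℕ) :
    Matrix ((Fin m ⊕ Fin m) ⊕ (Fin n ⊕ Fin n)) ((Fin m ⊕ Fin m) ⊕ (Fin n ⊕ Fin n)) ℂ :=
  1 - P1M m n

/-- `G(λ)`, built from `g_{12}` and `g_{21}`. -/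
def GMat (m n : ℕ) (g12 : Matrix (Fin m ⊕ Fin m) (Fin n ⊕ Fin n) ℂ)
    (g21 : Matrix (Fin n ⊕ Fin n) (Fin m ⊕ Fin m) ℂ) (l1 l2 : ℂ) :
    Matrix ((Fin m ⊕ Fin m) ⊕ (Fin n ⊕ Fin n)) ((Fin m ⊕ Fin m) ⊕ (Fin n ⊕ Fin n)) ℂ :=
  fromBlocks (fromBlocks (calA2 m - l2 • 1) 0 0 (calA2 m - l2 • 1)) g12
             g21 (fromBlocks (calA1 n - l1 • 1) 0 0 (calA1 n - l1 • 1))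

/-- `G` as a matrix over the polynomial ring `ℂ[λ_1, λ_2]` (variables `X 0 = λ_1`, `X 1 = λ_2`). -/
def GPoly (m n : ℕ) (g12 : Matrix (Fin m ⊕ Fin m) (Fin n ⊕ Fin n) ℂ)
    (g21 : Matrix (Fin n ⊕ Fin n) (Fin m ⊕ Fin m) ℂ) :
    Matrix ((Fin m ⊕ Fin m) ⊕ (Fin n ⊕ Fin n)) ((Fin m ⊕ Fin m) ⊕ (Fin n ⊕ Fin n))
      (MvPolynomial (Fin 2) ℂ) :=
  fromBlocks
    (fromBlocks ((calA2 m).map MvPolynomial.C - (MvPolynomial.X 1 : MvPolynomial (Fin 2) ℂ) • 1) 0 0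
      ((calA2 m).map MvPolynomial.C - (MvPolynomial.X 1 : MvPolynomial (Fin 2) ℂ) • 1))
    (g12.map MvPolynomial.C)
    (g21.map MvPolynomial.C)
    (fromBlocks ((calA1 n).map MvPolynomial.C - (MvPolynomial.X 0 : MvPolynomial (Fin 2) ℂ) • 1) 0 0
      ((calA1 n).map MvPolynomial.C - (MvPolynomial.X 0 : MvPolynomial (Fin 2) ℂ) • 1))

/-- The vector `col[0_m; 𝟏_m; 0_n; 𝟏_n]`. -/
def eVec (m n : ℕ) : ((Fin m ⊕ Fin m) ⊕ (Fin n ⊕ Fin n)) → ℂ :=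
  Sum.elim (Sum.elim (0 : Fin m → ℂ) (onesV (Fin m))) (Sum.elim (0 : Fin n → ℂ) (onesV (Fin n)))

/-- `diag{J_{2m}U_{2m}, J_{2n}U_{2n}}`. -/
def DJU (m n : ℕ) :
    Matrix ((Fin m ⊕ Fin m) ⊕ (Fin n ⊕ Fin n)) ((Fin m ⊕ Fin m) ⊕ (Fin n ⊕ Fin n)) ℂ :=
  fromBlocks (J2 m * U2 m) 0 0 (J2 n * U2 n)

/-- The block column `col[I_m; I_m; …; I_m]`. -/
def EcolId (m n : ℕ) : Matrix (Fin n × Fin m) (Fin m) ℂ :=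
  Matrix.of fun r l => if r.2 = l then 1 else 0


/-!
Entrywise, both identities are the displacement equation `𝒜 X − X 𝒜^* = i (u 𝟏^* + 𝟏 v^*)` of a
Toeplitz matrix `X = {f (p − q)}`. Since `𝒜` is `i` times the lower triangular all-ones matrix with
`1/2` on the diagonal, the `(p, q)` entry of the left side is `i` times a sum of `f` along a hook,
which telescopes to `∑_{k=-q}^{p} f k = (f 0 / 2 + f 1 + ⋯ + f p) + (f 0 / 2 + f (-1) + ⋯ + f (-q))`.
For the first identity `X` is the `ℓ`-th slice of `M_{42}`; for the second it is the `q`-th block of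
`M_{41}`, whose entries are themselves half-sums over the outer index, and these commute with the
half-sums over the inner index.
-/

open Finset

section HookSum

variable {G : Type*} [AddCommGroup G]

def hookSum (f : ℤ → G) (p q : ℕ) : G :=
  f (p - q) + ∑ s ∈ range p, f (s - q) + ∑ s ∈ range q, f (p - s)

-- Both sides are `∑_{k = -q}^{p} f k`.
theorem hookSum_eq (f : ℤ → G) (p q : ℕ) :
    hookSum f p q = f 0 + ∑ s ∈ range p, f (s + 1) + ∑ s ∈ range q, f (-(s + 1)) := by
  induction p with
  | zero =>
    have h := (sum_range_succ (fun s : ℕ => f (-s)) q).symm.trans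
      (sum_range_succ' (fun s : ℕ => f (-s)) q)
    simp only [Nat.cast_add, Nat.cast_one, Nat.cast_zero, neg_zero] at h
    simp only [hookSum, Nat.cast_zero, zero_sub, range_zero, sum_empty, add_zero]
    simpa [add_comm] using h
  | succ p ih =>
    have telescope : ∑ s ∈ range q, f (p + 1 - s)
        = ∑ s ∈ range q, f (p - s) + (f (p + 1) - f (p + 1 - q)) := by
      have h := sum_range_sub' (fun s : ℕ => f (p + 1 - s)) q
      push_cast at h
      simp only [add_sub_add_right_eq_sub, sum_sub_distrib, sub_zero] at h
      rw [← h]; abel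
    rw [hookSum] at ih ⊢
    push_cast
    rw [sum_range_succ, sum_range_succ, telescope]
    linear_combination (norm := abel) ih

end HookSum

def halfSumPos (f : ℤ → ℂ) (p : ℕ) : ℂ := 1 / 2 * f 0 + ∑ s ∈ range p, f (s + 1)

def halfSumNeg (f : ℤ → ℂ) (q : ℕ) : ℂ := 1 / 2 * f 0 + ∑ s ∈ range q, f (-(s + 1))

theorem hookSum_eq_halfSumPos_add_halfSumNeg (f : ℤ → ℂ) (p q : ℕ) :
    hookSum f p q = halfSumPos f p + halfSumNeg f q := by
  rw [hookSum_eq, halfSumPos, halfSumNeg]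
  ring

theorem halfSumNeg_add (f g : ℤ → ℂ) (q : ℕ) :
    halfSumNeg (fun r => f r + g r) q = halfSumNeg f q + halfSumNeg g q := by
  simp only [halfSumNeg, sum_add_distrib]
  ring

theorem hookSum_halfSumNeg_comm (t : ℤ → ℤ → ℂ) (p q k : ℕ) :
    hookSum (fun x => halfSumNeg (fun r => t r x) k) p q
      = halfSumNeg (fun r => hookSum (t r) p q) k := by
  simp only [hookSum, halfSumNeg, sum_add_distrib, mul_add, mul_sum]
  rw [sum_comm (s := range p), sum_comm (s := range q)]
  ring

theorem star_aC (r : ℤ) : star (aC r) = -aC r := by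
  unfold aC
  split_ifs <;> simp [neg_div]

theorem sum_aC_sub_mul {N : ℕ} (p : Fin N) (g : ℕ → ℂ) :
    ∑ s : Fin N, aC (p - s) * g s = Complex.I / 2 * g p + Complex.I * ∑ s ∈ range p, g s := by
  rw [Fin.sum_univ_eq_sum_range (fun s => aC (p - s) * g s), ← sum_range_add_sum_Ico _ p.isLt,
    sum_range_succ, mul_sum]
  have upper : ∑ s ∈ Ico (p + 1 : ℕ) N, aC (p - s) * g s = 0 :=
    sum_eq_zero fun s hs => by
      have : (p : ℤ) - s < 0 := by simp only [mem_Ico] at hs; omega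
      simp [aC, this]
  have lower : ∀ s ∈ range p, aC (p - s) * g s = Complex.I * g s := fun s hs => by
    have : ¬ (p : ℤ) - s < 0 ∧ (p : ℤ) - s ≠ 0 := by simp only [mem_range] at hs; omega
    simp [aC, this]
  rw [upper, sum_congr rfl lower]
  simp [aC, add_comm]

-- The `(p, q)` entry of `𝒜 X − X 𝒜^*` for the Toeplitz matrix `X = {f (p − q)}`.
theorem aC_toeplitz_displacement {N : ℕ} (f : ℤ → ℂ) (p q : Fin N) :
    ∑ s : Fin N, aC (p - s) * f (s - q) - ∑ s : Fin N, f (p - s) * star (aC (q - s))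
      = Complex.I * hookSum f p q := by
  simp only [star_aC, mul_neg, sum_neg_distrib, sub_neg_eq_add, mul_comm (f _) (aC _)]
  rw [sum_aC_sub_mul p (fun s => f (s - q)), sum_aC_sub_mul q (fun s => f (p - s)), hookSum]
  ring

theorem M41_apply (m n : ℕ) (t : ℤ → ℤ → ℂ) (j : Fin m) (c : Fin n × Fin m) :
    M41 m n t j c = halfSumNeg (fun r => t r (j - c.2)) c.1 :=
  rfl

theorem M4p_identities_general (m n : ℕ) (t : ℤ → ℤ → ℂ) :
    calA1 n * M42 m n t - M42 m n t * (A1 m n)ᴴ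
        = Complex.I • (K11 m n t * M21 m n + vecMulVec (onesV (Fin n)) (Krow m n t)) ∧
    calA2 m * M41 m n t - M41 m n t * (A2 m n)ᴴ
        = Complex.I • (K12 m n t * M22 m n + vecMulVec (onesV (Fin m)) (Krow m n t)) := by
  -- `K11`, `K12`, `Krow`, `m12e` and `m42e` are literally the half-sums, hence the closing `rfl`s.
  constructor
  · ext p ⟨q, l⟩
    have h := aC_toeplitz_displacement (fun r => m42e m t r l) p q
    simp only [Matrix.sub_apply, Matrix.mul_apply, Matrix.smul_apply, Matrix.add_apply,
      conjTranspose_apply, Fintype.sum_prod_type, calA1, M42, A1, M21, Matrix.of_apply,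
      apply_ite star, star_zero, mul_ite, mul_zero, mul_one, sum_ite_eq, sum_ite_eq', mem_univ,
      if_true, vecMulVec_apply, onesV, smul_eq_mul, one_mul] at h ⊢
    rw [h, hookSum_eq_halfSumPos_add_halfSumNeg]
    rfl
  · ext j ⟨q, l⟩
    have h := aC_toeplitz_displacement (fun x => halfSumNeg (fun r => t r x) q) j l
    simp only [Matrix.sub_apply, Matrix.mul_apply, Matrix.smul_apply, Matrix.add_apply,
      conjTranspose_apply, Fintype.sum_prod_type, calA2, A2, M22, M41_apply, Matrix.of_apply,
      apply_ite star, star_zero, mul_ite, mul_zero, mul_one, sum_ite_irrel, sum_const_zero,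
      sum_ite_eq', sum_ite_eq, mem_univ, if_true, vecMulVec_apply, onesV, smul_eq_mul, one_mul]
      at h ⊢
    rw [h, hookSum_halfSumNeg_comm]
    simp only [hookSum_eq_halfSumPos_add_halfSumNeg]
    rw [halfSumNeg_add]
    rfl

/-- `𝒜_1 M_{42} − M_{42} A_1^* = i(K_{11}M_{21} + 𝟏_n K)` and
`𝒜_2 M_{41} − M_{41} A_2^* = i(K_{12}M_{22} + 𝟏_m K)`. -/
theorem M4p_identities (m n : ℕ) (hm : 0 < m) (hn : 0 < n) (t : ℤ → ℤ → ℂ) :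
    calA1 n * M42 m n t - M42 m n t * (A1 m n)ᴴ
        = Complex.I • (K11 m n t * M21 m n + vecMulVec (onesV (Fin n)) (Krow m n t)) ∧
    calA2 m * M41 m n t - M41 m n t * (A2 m n)ᴴ
        = Complex.I • (K12 m n t * M22 m n + vecMulVec (onesV (Fin m)) (Krow m n t)) :=
  M4p_identities_general m n t

end
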